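/- arXiv:math/0405519 — 2 statements merged into one kernel-verified Lean document; each statement's English description precedes it below -/
import Mathlib

section
/- For any two probability measures μ₁, μ₂ on a standard Borel space (E, ℰ) there exists a maximal coupling, i.e. a coupling (Z₁, Z₂) such that ℙ(Z₁ ≠ Z₂) = ‖μ₁ − μ₂‖_var, and moreover ℙ(Z₁ = Z₂ and Z₁ ∈ Γ) = (μ₁ ∧ μ₂)(Γ) for all Γ ∈ ℰ. -/
open MeasureTheory

/-- Total variation distance `‖μ₁ − μ₂‖_var = sup {|μ₁ Γ − μ₂ Γ| : Γ measurable}`. -/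
noncomputable def tvDist {E : Type*} [MeasurableSpace E] (μ₁ μ₂ : Measure E) : ℝ :=
  ⨆ Γ : {s : Set E // MeasurableSet s}, |(μ₁ Γ.1).toReal - (μ₂ Γ.1).toReal|

/-- Existence of a maximal coupling: `ℙ(Z₁ ≠ Z₂) = ‖μ₁ − μ₂‖_var` and
`ℙ(Z₁ = Z₂, Z₁ ∈ Γ) = (μ₁ ∧ μ₂)(Γ)` for every measurable `Γ`. -/
theorem exists_maximal_coupling
    {E : Type*} [MeasurableSpace E] [StandardBorelSpace E]
    (μ₁ μ₂ : Measure E) [IsProbabilityMeasure μ₁] [IsProbabilityMeasure μ₂] :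
    ∃ (Ω : Type) (_ : MeasurableSpace Ω) (P : Measure Ω) (_ : IsProbabilityMeasure P)
      (Z₁ Z₂ : Ω → E), Measurable Z₁ ∧ Measurable Z₂ ∧
      P.map Z₁ = μ₁ ∧ P.map Z₂ = μ₂ ∧
      (P {ω | Z₁ ω ≠ Z₂ ω}).toReal = tvDist μ₁ μ₂ ∧
      ∀ Γ : Set E, MeasurableSet Γ →
        P {ω | Z₁ ω = Z₂ ω ∧ Z₁ ω ∈ Γ} = (μ₁ ⊓ μ₂) Γ := by
  classical
  letI := upgradeStandardBorel E
  -- the measurable diagonal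
  have hD : MeasurableSet (Set.diagonal E) :=
    (measurable_fst.stronglyMeasurable (f := (Prod.fst : E × E → E))).measurableSet_eq_fun
      measurable_snd.stronglyMeasurable
  obtain ⟨s, hs, hs₁, hs₂⟩ := hahn_decomposition (μ := μ₁) (ν := μ₂)
  set κ : Measure E := μ₂.restrict s + μ₁.restrict sᶜ with hκdef
  have hκ : κ = μ₁ ⊓ μ₂ := by
    apply le_antisymm
    · apply le_inf <;> rw [Measure.le_iff] <;> intro t ht <;>
        rw [Measure.add_apply, Measure.restrict_apply ht, Measure.restrict_apply ht,
          ← measure_inter_add_diff t hs, Set.diff_eq] <;> gcongr ?_ + ?_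
      · exact hs₁ _ (ht.inter hs) Set.inter_subset_right
      · exact le_rfl
      · exact le_rfl
      · exact hs₂ _ (ht.inter hs.compl) Set.inter_subset_right
    · rw [Measure.le_iff]; intro t ht
      rw [Measure.add_apply, Measure.restrict_apply ht, Measure.restrict_apply ht,
        ← measure_inter_add_diff t hs, Set.diff_eq]
      gcongr ?_ + ?_
      · exact (inf_le_right : μ₁ ⊓ μ₂ ≤ μ₂) _
      · exact (inf_le_left : μ₁ ⊓ μ₂ ≤ μ₁) _
  have hκ₁ : κ ≤ μ₁ := hκ ▸ inf_le_left
  have hκ₂ : κ ≤ μ₂ := hκ ▸ inf_le_right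
  haveI : IsFiniteMeasure κ := isFiniteMeasure_of_le μ₁ hκ₁
  set ξ : Measure E := μ₁ - κ with hξdef
  set η : Measure E := μ₂ - κ with hηdef
  have hξadd : κ + ξ = μ₁ := by
    rw [add_comm]; exact Measure.sub_add_cancel_of_le hκ₁
  have hηadd : κ + η = μ₂ := by
    rw [add_comm]; exact Measure.sub_add_cancel_of_le hκ₂
  have hκsc : κ sᶜ = μ₁ sᶜ := by
    rw [hκdef, Measure.add_apply, Measure.restrict_apply hs.compl,
      Measure.restrict_apply hs.compl, Set.compl_inter_self, Set.inter_self, measure_empty,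
      zero_add]
  have hκs : κ s = μ₂ s := by
    rw [hκdef, Measure.add_apply, Measure.restrict_apply hs, Measure.restrict_apply hs,
      Set.inter_self, Set.inter_compl_self, measure_empty, add_zero]
  have hξsc : ξ sᶜ = 0 := by
    rw [hξdef, Measure.sub_apply hs.compl hκ₁, hκsc, tsub_self]
  have hηs : η s = 0 := by
    rw [hηdef, Measure.sub_apply hs hκ₂, hκs, tsub_self]
  set c := ξ Set.univ with hcdef
  have hc_ne_top : c ≠ ⊤ := measure_ne_top ξ _
  have hξs : ξ s = c := by
    have := measure_add_measure_compl (μ := ξ) hs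
    rw [hξsc, add_zero] at this
    exact this
  have hηuniv : η Set.univ = c := by
    rw [hηdef, hcdef, hξdef, Measure.sub_apply .univ hκ₂, Measure.sub_apply .univ hκ₁,
      measure_univ (μ := μ₂), measure_univ (μ := μ₁)]
  -- the coupling measure
  set diag : E → E × E := fun x => (x, x) with hdiagdef
  have hdiag : Measurable diag := measurable_id.prodMk measurable_id
  set P : Measure (E × E) := κ.map diag + c⁻¹ • (ξ.prod η) with hPdef
  have hprodD : (ξ.prod η) (Set.diagonal E) = 0 := by
    have hsub : Set.diagonal E ⊆ (s ×ˢ s) ∪ (sᶜ ×ˢ sᶜ) := by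
      rintro ⟨x, y⟩ hxy
      obtain rfl : x = y := hxy
      by_cases hx : x ∈ s
      · exact Or.inl ⟨hx, hx⟩
      · exact Or.inr ⟨hx, hx⟩
    refine le_antisymm ?_ zero_le
    calc (ξ.prod η) (Set.diagonal E) ≤ (ξ.prod η) ((s ×ˢ s) ∪ (sᶜ ×ˢ sᶜ)) :=
          measure_mono hsub
      _ ≤ (ξ.prod η) (s ×ˢ s) + (ξ.prod η) (sᶜ ×ˢ sᶜ) := measure_union_le _ _
      _ = 0 := by rw [Measure.prod_prod, Measure.prod_prod, hηs, hξsc, mul_zero, zero_mul,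
          add_zero]
  have hcc : c⁻¹ * (c * c) = c := by
    by_cases hc : c = 0
    · simp [hc]
    · rw [← mul_assoc, ENNReal.inv_mul_cancel hc hc_ne_top, one_mul]
  have hproduniv : (ξ.prod η) Set.univ = c * c := by
    rw [← Set.univ_prod_univ, Measure.prod_prod, hηuniv]
  have hκuniv_le : κ Set.univ ≤ 1 := by
    simpa using Measure.le_iff'.mp hκ₁ Set.univ
  have hcκ : κ Set.univ + c = 1 := by
    rw [hcdef, hξdef, Measure.sub_apply .univ hκ₁, measure_univ (μ := μ₁),
      add_tsub_cancel_of_le hκuniv_le]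
  have hPuniv : P Set.univ = 1 := by
    rw [hPdef, Measure.add_apply, Measure.map_apply hdiag .univ, Set.preimage_univ,
      Measure.smul_apply, hproduniv, smul_eq_mul, hcc, hcκ]
  haveI hPprob : IsProbabilityMeasure P := ⟨hPuniv⟩
  -- marginals of the product part
  have hfst : (c⁻¹ • (ξ.prod η)).map Prod.fst = ξ := by
    by_cases hc : c = 0
    · have hξ0 : ξ = 0 := Measure.measure_univ_eq_zero.mp (hcdef.symm.trans hc)
      simp [hξ0]
    · rw [Measure.map_smul, Measure.map_fst_prod, hηuniv, smul_smul,
        ENNReal.inv_mul_cancel hc hc_ne_top, one_smul]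
  have hsnd : (c⁻¹ • (ξ.prod η)).map Prod.snd = η := by
    by_cases hc : c = 0
    · have hη0 : η = 0 := Measure.measure_univ_eq_zero.mp (hηuniv.trans hc)
      simp [hη0]
    · rw [Measure.map_smul, Measure.map_snd_prod, ← hcdef, smul_smul,
        ENNReal.inv_mul_cancel hc hc_ne_top, one_smul]
  have hmapfst : P.map Prod.fst = μ₁ := by
    rw [hPdef, Measure.map_add _ _ measurable_fst, Measure.map_map measurable_fst hdiag,
      hfst]
    have : (Prod.fst ∘ diag) = id := rfl
    rw [this, Measure.map_id, hξadd]
  have hmapsnd : P.map Prod.snd = μ₂ := by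
    rw [hPdef, Measure.map_add _ _ measurable_snd, Measure.map_map measurable_snd hdiag,
      hsnd]
    have : (Prod.snd ∘ diag) = id := rfl
    rw [this, Measure.map_id, hηadd]
  -- probability of the off-diagonal
  have hPne : P {ω : E × E | ω.1 ≠ ω.2} = c := by
    have hset : {ω : E × E | ω.1 ≠ ω.2} = (Set.diagonal E)ᶜ := rfl
    rw [hset, hPdef, Measure.add_apply, Measure.map_apply hdiag hD.compl]
    have hpre : diag ⁻¹' (Set.diagonal E)ᶜ = ∅ := by
      ext x; simp [hdiagdef, Set.diagonal]
    rw [hpre, measure_empty, zero_add, Measure.smul_apply, smul_eq_mul,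
      measure_compl hD (measure_ne_top _ _), hproduniv, hprodD, tsub_zero, hcc]
  -- pointwise values of μᵢ
  have hμ₁Γ : ∀ Γ : Set E, μ₁ Γ = κ Γ + ξ Γ := fun Γ => by
    rw [← hξadd]; rfl
  have hμ₂Γ : ∀ Γ : Set E, μ₂ Γ = κ Γ + η Γ := fun Γ => by
    rw [← hηadd]; rfl
  -- tvDist equals c.toReal
  have hbound : ∀ Γ : {t : Set E // MeasurableSet t},
      |(μ₁ Γ.1).toReal - (μ₂ Γ.1).toReal| ≤ c.toReal := by
    rintro ⟨Γ, hΓ⟩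
    have hξΓ : (ξ Γ).toReal ≤ c.toReal :=
      ENNReal.toReal_mono hc_ne_top (measure_mono (Set.subset_univ _))
    have hηΓ : (η Γ).toReal ≤ c.toReal := by
      refine ENNReal.toReal_mono hc_ne_top ?_
      rw [← hηuniv]; exact measure_mono (Set.subset_univ _)
    have h1 : (μ₁ Γ).toReal = (κ Γ).toReal + (ξ Γ).toReal := by
      rw [hμ₁Γ, ENNReal.toReal_add (measure_ne_top _ _) (measure_ne_top _ _)]
    have h2 : (μ₂ Γ).toReal = (κ Γ).toReal + (η Γ).toReal := by
      rw [hμ₂Γ, ENNReal.toReal_add (measure_ne_top _ _) (measure_ne_top _ _)]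
    rw [h1, h2, abs_sub_le_iff]
    constructor
    · nlinarith [ENNReal.toReal_nonneg (a := η Γ), ENNReal.toReal_nonneg (a := ξ Γ)]
    · nlinarith [ENNReal.toReal_nonneg (a := η Γ), ENNReal.toReal_nonneg (a := ξ Γ)]
  have htv : tvDist μ₁ μ₂ = c.toReal := by
    refine le_antisymm (ciSup_le hbound) ?_
    have hval : |(μ₁ s).toReal - (μ₂ s).toReal| = c.toReal := by
      have h1 : (μ₁ s).toReal = (κ s).toReal + c.toReal := by
        rw [hμ₁Γ, hξs, ENNReal.toReal_add (measure_ne_top _ _) hc_ne_top]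
      have h2 : (μ₂ s).toReal = (κ s).toReal := by
        rw [hμ₂Γ, hηs, add_zero]
      rw [h1, h2]
      simp [abs_of_nonneg, ENNReal.toReal_nonneg]
    calc c.toReal = |(μ₁ s).toReal - (μ₂ s).toReal| := hval.symm
      _ ≤ tvDist μ₁ μ₂ :=
          le_ciSup ⟨c.toReal, Set.forall_mem_range.mpr hbound⟩ (⟨s, hs⟩ : {t : Set E // MeasurableSet t})
  have hPeq : ∀ Γ : Set E, MeasurableSet Γ →
      P {p : E × E | p.1 = p.2 ∧ p.1 ∈ Γ} = (μ₁ ⊓ μ₂) Γ := by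
    intro Γ hΓ
    have hset : {ω : E × E | ω.1 = ω.2 ∧ ω.1 ∈ Γ} = Set.diagonal E ∩ Prod.fst ⁻¹' Γ := by
      ext ⟨x, y⟩; simp [Set.diagonal, and_comm]
    have hmeas : MeasurableSet {ω : E × E | ω.1 = ω.2 ∧ ω.1 ∈ Γ} := by
      rw [hset]; exact hD.inter (measurable_fst hΓ)
    rw [hPdef, Measure.add_apply, Measure.map_apply hdiag hmeas]
    have hpre : diag ⁻¹' {ω : E × E | ω.1 = ω.2 ∧ ω.1 ∈ Γ} = Γ := by
      ext x; simp [hdiagdef]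
    have hprod0 : (ξ.prod η) {ω : E × E | ω.1 = ω.2 ∧ ω.1 ∈ Γ} = 0 := by
      refine le_antisymm (le_trans (measure_mono ?_) hprodD.le) zero_le
      rintro ⟨x, y⟩ ⟨hxy, _⟩; exact hxy
    rw [hpre, Measure.smul_apply, hprod0, smul_eq_mul, mul_zero, add_zero, hκ]
  -- transport to a `Type 0` via a measurable embedding into ℝ
  have hE : Nonempty E := by
    rcases isEmpty_or_nonempty E with h | h
    · exfalso
      have h1 := measure_univ (μ := μ₁)
      rw [Set.univ_eq_empty_iff.mpr h, measure_empty] at h1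
      exact zero_ne_one h1
    · exact h
  obtain ⟨f, hf⟩ := exists_measurableEmbedding_real E
  obtain ⟨g, hg, hgf⟩ := hf.exists_measurable_extend measurable_id fun _ => hE
  have hgf' : ∀ x, g (f x) = x := fun x => congrFun hgf x
  set F : E × E → ℝ × ℝ := fun p => (f p.1, f p.2) with hFdef
  have hF : Measurable F := (hf.measurable.comp measurable_fst).prodMk
    (hf.measurable.comp measurable_snd)
  set Q : Measure (ℝ × ℝ) := P.map F with hQdef
  set Z₁ : ℝ × ℝ → E := fun ω => g ω.1 with hZ₁def
  set Z₂ : ℝ × ℝ → E := fun ω => g ω.2 with hZ₂def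
  have hZ₁ : Measurable Z₁ := hg.comp measurable_fst
  have hZ₂ : Measurable Z₂ := hg.comp measurable_snd
  haveI : IsProbabilityMeasure Q := by
    constructor
    rw [hQdef, Measure.map_apply hF .univ, Set.preimage_univ, hPuniv]
  have hQZ₁ : Q.map Z₁ = μ₁ := by
    rw [hQdef, Measure.map_map hZ₁ hF]
    have : (Z₁ ∘ F) = Prod.fst := by
      funext p; simp [hZ₁def, hFdef, hgf']
    rw [this, hmapfst]
  have hQZ₂ : Q.map Z₂ = μ₂ := by
    rw [hQdef, Measure.map_map hZ₂ hF]
    have : (Z₂ ∘ F) = Prod.snd := by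
      funext p; simp [hZ₂def, hFdef, hgf']
    rw [this, hmapsnd]
  have hmeas_eq : MeasurableSet {ω : ℝ × ℝ | Z₁ ω = Z₂ ω} := by
    have : {ω : ℝ × ℝ | Z₁ ω = Z₂ ω} = (fun ω : ℝ × ℝ => (Z₁ ω, Z₂ ω)) ⁻¹' Set.diagonal E := by
      ext ω; simp [Set.diagonal]
    rw [this]
    exact (hZ₁.prodMk hZ₂) hD
  have hpre_ne : F ⁻¹' {ω : ℝ × ℝ | Z₁ ω ≠ Z₂ ω} = {p : E × E | p.1 ≠ p.2} := by
    ext p; simp [hFdef, hZ₁def, hZ₂def, hgf']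
  refine ⟨ℝ × ℝ, inferInstance, Q, inferInstance, Z₁, Z₂, hZ₁, hZ₂, hQZ₁, hQZ₂, ?_, ?_⟩
  · have hset : {ω : ℝ × ℝ | Z₁ ω ≠ Z₂ ω} = {ω : ℝ × ℝ | Z₁ ω = Z₂ ω}ᶜ := rfl
    rw [hQdef, hset, Measure.map_apply hF hmeas_eq.compl]
    have : F ⁻¹' {ω : ℝ × ℝ | Z₁ ω = Z₂ ω}ᶜ = {p : E × E | p.1 ≠ p.2} := by
      ext p; simp [hFdef, hZ₁def, hZ₂def, hgf']
    rw [this, hPne, htv]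
  · intro Γ hΓ
    have hmeas : MeasurableSet {ω : ℝ × ℝ | Z₁ ω = Z₂ ω ∧ Z₁ ω ∈ Γ} := by
      have : {ω : ℝ × ℝ | Z₁ ω = Z₂ ω ∧ Z₁ ω ∈ Γ} =
          {ω : ℝ × ℝ | Z₁ ω = Z₂ ω} ∩ Z₁ ⁻¹' Γ := rfl
      rw [this]; exact hmeas_eq.inter (hZ₁ hΓ)
    rw [hQdef, Measure.map_apply hF hmeas]
    have hpre : F ⁻¹' {ω : ℝ × ℝ | Z₁ ω = Z₂ ω ∧ Z₁ ω ∈ Γ} =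
        {p : E × E | p.1 = p.2 ∧ p.1 ∈ Γ} := by
      ext p; simp [hFdef, hZ₁def, hZ₂def, hgf']
    rw [hpre, hPeq Γ hΓ]
end

section
/- Let E and F be Polish spaces, f₀ : E → F a measurable map, and μ₁, μ₂ probability measures on E with pushforwards νᵢ = (f₀)_* μᵢ. Then there exists a coupling (V₁, V₂) of (μ₁, μ₂) such that (f₀(V₁), f₀(V₂)) is a maximal coupling of (ν₁, ν₂), i.e. ℙ(f₀(V₁) = f₀(V₂)) = 1 − ‖ν₁ − ν₂‖_var. -/
open MeasureTheory

open ProbabilityTheory Set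
open scoped ENNReal

lemma snd_compProd_apply' {α β : Type*} [MeasurableSpace α] [MeasurableSpace β]
    (μ : Measure α) [SFinite μ] (κ : Kernel α β) [IsSFiniteKernel κ]
    {t : Set β} (ht : MeasurableSet t) :
    (μ ⊗ₘ κ).snd t = ∫⁻ y, κ y t ∂μ := by
  rw [Measure.snd_apply ht, Measure.compProd_apply (measurable_snd ht)]
  rfl

lemma condKernel_eq_one
    {E F : Type} [TopologicalSpace E] [PolishSpace E] [MeasurableSpace E] [BorelSpace E]
    [Nonempty E]
    [TopologicalSpace F] [PolishSpace F] [MeasurableSpace F] [BorelSpace F]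
    (f₀ : E → F) (hf₀ : Measurable f₀)
    (μ : Measure E) [IsProbabilityMeasure μ] :
    ∀ᵐ y ∂((μ.map (fun x => (f₀ x, x))).fst),
      (μ.map (fun x => (f₀ x, x))).condKernel y {x | f₀ x = y} = 1 := by
  set ρ : Measure (F × E) := μ.map (fun x => (f₀ x, x)) with hρ
  have hmeas : Measurable (fun x => (f₀ x, x)) := hf₀.prodMk measurable_id
  have : IsProbabilityMeasure ρ := Measure.isProbabilityMeasure_map hmeas.aemeasurable
  have hB : MeasurableSet {p : F × E | f₀ p.2 = p.1} :=
    StronglyMeasurable.measurableSet_eq_fun (hf₀.comp measurable_snd).stronglyMeasurable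
      measurable_fst.stronglyMeasurable
  have hρB : ρ {p : F × E | f₀ p.2 = p.1} = 1 := by
    rw [hρ, Measure.map_apply hmeas hB]
    have : (fun x => (f₀ x, x)) ⁻¹' {p : F × E | f₀ p.2 = p.1} = univ := by
      ext x; simp
    rw [this]; exact measure_univ
  have hdis : ρ.fst ⊗ₘ ρ.condKernel = ρ := ρ.disintegrate ρ.condKernel
  have key : ∫⁻ y, ρ.condKernel y {x | f₀ x = y} ∂ρ.fst = 1 := by
    have h := Measure.compProd_apply (μ := ρ.fst) (κ := ρ.condKernel) hB
    rw [hdis, hρB] at h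
    exact h.symm
  have hle : (fun y => ρ.condKernel y {x | f₀ x = y}) ≤ᵐ[ρ.fst] (fun _ => 1) :=
    Filter.Eventually.of_forall (fun y => prob_le_one)
  exact ae_eq_of_ae_le_of_lintegral_le hle
    (by rw [key]; exact ENNReal.one_ne_top) aemeasurable_const
    (by rw [key, lintegral_one, measure_univ])

/-- Given Polish spaces `E`, `F`, a measurable `f₀ : E → F` and probability measures
`μ₁, μ₂` on `E` with pushforwards `νᵢ = (f₀)_* μᵢ`, there is a coupling `(V₁, V₂)` of
`(μ₁, μ₂)` such that `(f₀(V₁), f₀(V₂))` is a maximal coupling of `(ν₁, ν₂)`. -/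
theorem exists_coupling_with_maximal_image_coupling
    {E F : Type} [TopologicalSpace E] [PolishSpace E] [MeasurableSpace E] [BorelSpace E]
    [TopologicalSpace F] [PolishSpace F] [MeasurableSpace F] [BorelSpace F]
    (f₀ : E → F) (hf₀ : Measurable f₀)
    (μ₁ μ₂ : Measure E) [IsProbabilityMeasure μ₁] [IsProbabilityMeasure μ₂] :
    ∃ (Ω : Type) (_ : MeasurableSpace Ω) (P : Measure Ω) (_ : IsProbabilityMeasure P)
      (V₁ V₂ : Ω → E), Measurable V₁ ∧ Measurable V₂ ∧
      P.map V₁ = μ₁ ∧ P.map V₂ = μ₂ ∧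
      (P {ω | f₀ (V₁ ω) = f₀ (V₂ ω)}).toReal
        = 1 - tvDist (μ₁.map f₀) (μ₂.map f₀) := by
  have hne : Nonempty E := μ₁.nonempty_of_neZero
  have hmeas : Measurable (fun x => (f₀ x, x)) := hf₀.prodMk measurable_id
  set m₁ : Measure (F × E) := μ₁.map (fun x => (f₀ x, x)) with hm₁def
  set m₂ : Measure (F × E) := μ₂.map (fun x => (f₀ x, x)) with hm₂def
  have him₁ : IsProbabilityMeasure m₁ := Measure.isProbabilityMeasure_map hmeas.aemeasurable
  have him₂ : IsProbabilityMeasure m₂ := Measure.isProbabilityMeasure_map hmeas.aemeasurable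
  set ν₁ : Measure F := m₁.fst with hν₁def
  set ν₂ : Measure F := m₂.fst with hν₂def
  set κ₁ : Kernel F E := m₁.condKernel with hκ₁def
  set κ₂ : Kernel F E := m₂.condKernel with hκ₂def
  have hdis₁ : ν₁ ⊗ₘ κ₁ = m₁ := m₁.disintegrate _
  have hdis₂ : ν₂ ⊗ₘ κ₂ = m₂ := m₂.disintegrate _
  have hν₁f : ν₁ = μ₁.map f₀ := by
    rw [hν₁def, hm₁def, Measure.fst, Measure.map_map measurable_fst hmeas]; rfl
  have hν₂f : ν₂ = μ₂.map f₀ := by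
    rw [hν₂def, hm₂def, Measure.fst, Measure.map_map measurable_fst hmeas]; rfl
  have hμ₁snd : m₁.snd = μ₁ := by
    rw [hm₁def, Measure.snd, Measure.map_map measurable_snd hmeas]
    exact Measure.map_id
  have hμ₂snd : m₂.snd = μ₂ := by
    rw [hm₂def, Measure.snd, Measure.map_map measurable_snd hmeas]
    exact Measure.map_id
  obtain ⟨S, hSm, hS₁, hS₂⟩ := hahn_decomposition (μ := ν₁) (ν := ν₂)
  set lam : Measure F := ν₁.restrict Sᶜ + ν₂.restrict S with hlamdef
  set r₁ : Measure F := ν₁.restrict S - ν₂.restrict S with hr₁def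
  set r₂ : Measure F := ν₂.restrict Sᶜ - ν₁.restrict Sᶜ with hr₂def
  have h_le_r₁ : ν₂.restrict S ≤ ν₁.restrict S := by
    refine Measure.le_iff.2 fun t ht => ?_
    rw [Measure.restrict_apply ht, Measure.restrict_apply ht]
    exact hS₁ _ (ht.inter hSm) inter_subset_right
  have h_le_r₂ : ν₁.restrict Sᶜ ≤ ν₂.restrict Sᶜ := by
    refine Measure.le_iff.2 fun t ht => ?_
    rw [Measure.restrict_apply ht, Measure.restrict_apply ht]
    exact hS₂ _ (ht.inter hSm.compl) inter_subset_right
  have hr₁ : ∀ t, MeasurableSet t → r₁ t = ν₁ (t ∩ S) - ν₂ (t ∩ S) := by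
    intro t ht
    rw [hr₁def, Measure.sub_apply ht h_le_r₁, Measure.restrict_apply ht,
      Measure.restrict_apply ht]
  have hr₂ : ∀ t, MeasurableSet t → r₂ t = ν₂ (t ∩ Sᶜ) - ν₁ (t ∩ Sᶜ) := by
    intro t ht
    rw [hr₂def, Measure.sub_apply ht h_le_r₂, Measure.restrict_apply ht,
      Measure.restrict_apply ht]
  have hlam_app : ∀ t, MeasurableSet t → lam t = ν₁ (t ∩ Sᶜ) + ν₂ (t ∩ S) := by
    intro t ht
    rw [hlamdef, Measure.add_apply, Measure.restrict_apply ht, Measure.restrict_apply ht]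
  have hsum₁ : lam + r₁ = ν₁ := by
    ext t ht
    rw [Measure.add_apply, hlam_app t ht, hr₁ t ht, add_assoc,
      add_tsub_cancel_of_le (hS₁ _ (ht.inter hSm) inter_subset_right)]
    have h := measure_inter_add_diff (μ := ν₁) t hSm
    rw [diff_eq] at h
    rw [add_comm]
    exact h
  have hsum₂ : lam + r₂ = ν₂ := by
    ext t ht
    rw [Measure.add_apply, hlam_app t ht, hr₂ t ht, add_comm (ν₁ (t ∩ Sᶜ)) (ν₂ (t ∩ S)),
      add_assoc, add_tsub_cancel_of_le (hS₂ _ (ht.inter hSm.compl) inter_subset_right)]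
    have h := measure_inter_add_diff (μ := ν₂) t hSm
    rw [diff_eq] at h
    exact h
  have hfinr₁ : IsFiniteMeasure r₁ := isFiniteMeasure_of_le ν₁ (hsum₁ ▸ Measure.le_add_left le_rfl)
  have hfinr₂ : IsFiniteMeasure r₂ := isFiniteMeasure_of_le ν₂ (hsum₂ ▸ Measure.le_add_left le_rfl)
  have hfinlam : IsFiniteMeasure lam := isFiniteMeasure_of_le ν₁ (hsum₁ ▸ Measure.le_add_right le_rfl)
  set c : ℝ≥0∞ := r₁ univ with hcdef
  have hmassunion : ∀ (r : Measure F), lam + r = ν₁ ∨ lam + r = ν₂ → lam univ + r univ = 1 := by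
    rintro r (h | h)
    · have := congrArg (fun m : Measure F => m univ) h
      simpa [Measure.add_apply] using this
    · have := congrArg (fun m : Measure F => m univ) h
      simpa [Measure.add_apply] using this
  have hmass₁ : lam univ + c = 1 := hmassunion r₁ (Or.inl hsum₁)
  have hmass₂ : lam univ + r₂ univ = 1 := hmassunion r₂ (Or.inr hsum₂)
  have hr₂univ : r₂ univ = c :=
    (ENNReal.add_right_inj (measure_ne_top lam _)).1 (hmass₂.trans hmass₁.symm)
  have hc_ne_top : c ≠ ⊤ := measure_ne_top r₁ _
  have hc0 : c = 0 → r₁ = 0 ∧ r₂ = 0 := fun h =>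
    ⟨Measure.measure_univ_eq_zero.1 h, Measure.measure_univ_eq_zero.1 (hr₂univ.trans h)⟩
  -- the coupling measure
  set κP : Kernel F (E × E) := κ₁ ×ₖ κ₂ with hκPdef
  set D : Measure (E × E) := (lam ⊗ₘ κP).snd with hDdef
  set a : Measure E := (r₁ ⊗ₘ κ₁).snd with hadef
  set b : Measure E := ((c⁻¹ • r₂) ⊗ₘ κ₂).snd with hbdef
  set P : Measure (E × E) := D + a.prod b with hPdef
  have ha_app : ∀ t : Set E, MeasurableSet t → a t = ∫⁻ y, κ₁ y t ∂r₁ := by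
    intro t ht; rw [hadef, snd_compProd_apply' _ _ ht]
  have hb_app : ∀ t : Set E, MeasurableSet t → b t = c⁻¹ * ∫⁻ y, κ₂ y t ∂r₂ := by
    intro t ht
    rw [hbdef, snd_compProd_apply' _ _ ht, lintegral_smul_measure, smul_eq_mul]
  have ha_univ : a univ = c := by
    rw [ha_app _ .univ]
    simp [measure_univ]
    exact hcdef.symm
  have hb_univ : b univ = c⁻¹ * c := by
    rw [hb_app _ .univ]
    simp [measure_univ, hr₂univ]
  have hD_app : ∀ t : Set (E × E), MeasurableSet t → D t = ∫⁻ y, κP y t ∂lam := by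
    intro t ht; rw [hDdef, snd_compProd_apply' _ _ ht]
  -- marginals
  have hmap₁ : P.map Prod.fst = μ₁ := by
    ext t ht
    rw [Measure.map_apply measurable_fst ht, ← prod_univ, hPdef, Measure.add_apply,
      Measure.prod_prod, hD_app _ (ht.prod .univ), ha_app _ ht, hb_univ]
    have hκP : ∀ y, κP y (t ×ˢ univ) = κ₁ y t := by
      intro y
      rw [hκPdef, Kernel.prod_apply, Measure.prod_prod, measure_univ, mul_one]
    simp only [hκP]
    have hRHS : μ₁ t = ∫⁻ y, κ₁ y t ∂lam + ∫⁻ y, κ₁ y t ∂r₁ := by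
      conv_lhs => rw [← hμ₁snd, ← hdis₁]
      rw [snd_compProd_apply' _ _ ht, ← hsum₁, lintegral_add_measure]
    rw [hRHS]
    rcases eq_or_ne c 0 with h0 | h0
    · obtain ⟨h₁, h₂⟩ := hc0 h0
      rw [h₁]
      simp
    · rw [ENNReal.inv_mul_cancel h0 hc_ne_top, mul_one]
  have hmap₂ : P.map Prod.snd = μ₂ := by
    ext t ht
    rw [Measure.map_apply measurable_snd ht, ← univ_prod, hPdef, Measure.add_apply,
      Measure.prod_prod, hD_app _ (MeasurableSet.univ.prod ht), ha_univ, hb_app _ ht]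
    have hκP : ∀ y, κP y (univ ×ˢ t) = κ₂ y t := by
      intro y
      rw [hκPdef, Kernel.prod_apply, Measure.prod_prod, measure_univ, one_mul]
    simp only [hκP]
    have hRHS : μ₂ t = ∫⁻ y, κ₂ y t ∂lam + ∫⁻ y, κ₂ y t ∂r₂ := by
      conv_lhs => rw [← hμ₂snd, ← hdis₂]
      rw [snd_compProd_apply' _ _ ht, ← hsum₂, lintegral_add_measure]
    rw [hRHS]
    rcases eq_or_ne c 0 with h0 | h0
    · obtain ⟨h₁, h₂⟩ := hc0 h0
      rw [h₂]
      simp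
    · rw [← mul_assoc, ENNReal.mul_inv_cancel h0 hc_ne_top, one_mul]
  have hPuniv : IsProbabilityMeasure P := by
    constructor
    rw [hPdef, Measure.add_apply, ← univ_prod_univ, Measure.prod_prod, ha_univ, hb_univ,
      hD_app _ (MeasurableSet.univ.prod .univ), univ_prod_univ]
    have : ∀ y, κP y (univ : Set (E × E)) = 1 := fun y => measure_univ
    simp only [this, lintegral_one]
    rcases eq_or_ne c 0 with h0 | h0
    · rw [h0] at hmass₁ ⊢
      simpa using hmass₁
    · rw [ENNReal.inv_mul_cancel h0 hc_ne_top, mul_one]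
      exact hmass₁
  -- the event
  set A : Set (E × E) := {p : E × E | f₀ p.1 = f₀ p.2} with hAdef
  have hA : MeasurableSet A :=
    StronglyMeasurable.measurableSet_eq_fun (hf₀.comp measurable_fst).stronglyMeasurable
      (hf₀.comp measurable_snd).stronglyMeasurable
  have hae₁ : ∀ᵐ y ∂ν₁, κ₁ y {x | f₀ x = y} = 1 := condKernel_eq_one f₀ hf₀ μ₁
  have hae₂ : ∀ᵐ y ∂ν₂, κ₂ y {x | f₀ x = y} = 1 := condKernel_eq_one f₀ hf₀ μ₂
  have hlam_le₁ : lam ≤ ν₁ := hsum₁ ▸ Measure.le_add_right le_rfl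
  have hlam_le₂ : lam ≤ ν₂ := hsum₂ ▸ Measure.le_add_right le_rfl
  have hr₁_le : r₁ ≤ ν₁ := hsum₁ ▸ Measure.le_add_left le_rfl
  have hr₂_le : r₂ ≤ ν₂ := hsum₂ ▸ Measure.le_add_left le_rfl
  have heqmeas : ∀ y : F, MeasurableSet {x | f₀ x = y} := fun y =>
    StronglyMeasurable.measurableSet_eq_fun hf₀.stronglyMeasurable stronglyMeasurable_const
  have hDA : D A = lam univ := by
    rw [hD_app _ hA]
    have hone : ∀ᵐ y ∂lam, κP y A = 1 := by
      filter_upwards [hae₁.filter_mono (MeasureTheory.ae_mono hlam_le₁),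
        hae₂.filter_mono (MeasureTheory.ae_mono hlam_le₂)] with y h1 h2
      rw [hκPdef, Kernel.prod_apply]
      refine le_antisymm prob_le_one ?_
      calc (1 : ℝ≥0∞) = κ₁ y {x | f₀ x = y} * κ₂ y {x | f₀ x = y} := by rw [h1, h2, mul_one]
        _ = (κ₁ y).prod (κ₂ y) ({x | f₀ x = y} ×ˢ {x | f₀ x = y}) :=
            (Measure.prod_prod _ _).symm
        _ ≤ (κ₁ y).prod (κ₂ y) A := by
            refine measure_mono ?_
            rintro ⟨x₁, x₂⟩ ⟨hx₁, hx₂⟩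
            simp only [hAdef, mem_setOf_eq] at *
            rw [hx₁, hx₂]
    rw [lintegral_congr_ae hone, lintegral_one]
  have haS : a (f₀ ⁻¹' S)ᶜ = 0 := by
    rw [ha_app _ (hf₀ hSm).compl]
    have hr₁S : ∀ᵐ y ∂r₁, y ∈ S := by
      rw [ae_iff]
      have h1 : {y | ¬ y ∈ S} = Sᶜ := rfl
      rw [h1, hr₁ _ hSm.compl]
      simp
    rw [lintegral_eq_zero_iff (Kernel.measurable_coe _ (hf₀ hSm).compl)]
    filter_upwards [hae₁.filter_mono (MeasureTheory.ae_mono hr₁_le), hr₁S] with y h1 hyS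
    have hsub : (f₀ ⁻¹' S)ᶜ ⊆ {x | f₀ x = y}ᶜ := by
      intro x hx hxy
      exact hx (by rw [mem_preimage, hxy]; exact hyS)
    refine measure_mono_null hsub ?_
    rw [prob_compl_eq_one_sub (heqmeas y), h1, tsub_self]
  have hbS : b (f₀ ⁻¹' Sᶜ)ᶜ = 0 := by
    rw [hb_app _ (hf₀ hSm.compl).compl]
    have hr₂S : ∀ᵐ y ∂r₂, y ∈ Sᶜ := by
      rw [ae_iff]
      have h1 : {y | ¬ y ∈ Sᶜ} = S := by ext z; simp
      rw [h1, hr₂ _ hSm]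
      simp
    have h0 : ∫⁻ y, κ₂ y (f₀ ⁻¹' Sᶜ)ᶜ ∂r₂ = 0 := by
      rw [lintegral_eq_zero_iff (Kernel.measurable_coe _ (hf₀ hSm.compl).compl)]
      filter_upwards [hae₂.filter_mono (MeasureTheory.ae_mono hr₂_le), hr₂S] with y h2 hyS
      have hsub : (f₀ ⁻¹' Sᶜ)ᶜ ⊆ {x | f₀ x = y}ᶜ := by
        intro x hx hxy
        exact hx (by rw [mem_preimage, hxy]; exact hyS)
      refine measure_mono_null hsub ?_
      rw [prob_compl_eq_one_sub (heqmeas y), h2, tsub_self]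
    rw [h0, mul_zero]
  have hRA : (a.prod b) A = 0 := by
    have hsub : A ⊆ ((f₀ ⁻¹' S)ᶜ ×ˢ univ) ∪ (univ ×ˢ (f₀ ⁻¹' Sᶜ)ᶜ) := by
      rintro ⟨x₁, x₂⟩ hx
      simp only [hAdef, mem_setOf_eq] at hx
      by_cases h : f₀ x₁ ∈ S
      · right
        refine ⟨mem_univ _, fun hc => ?_⟩
        rw [mem_preimage] at hc
        exact hc (hx ▸ h)
      · left
        exact ⟨h, mem_univ _⟩
    refine measure_mono_null hsub (measure_union_null ?_ ?_)
    · rw [Measure.prod_prod, haS, zero_mul]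
    · rw [Measure.prod_prod, hbS, mul_zero]
  have hPA : P A = lam univ := by
    rw [hPdef, Measure.add_apply, hDA, hRA, add_zero]
  -- total variation computation
  set g : Set F → ℝ := fun t => (ν₁ t).toReal - (ν₂ t).toReal with hgdef
  have hg_split : ∀ t u : Set F, MeasurableSet u → g t = g (t ∩ u) + g (t \ u) := by
    intro t u hu
    have h₁ := measure_inter_add_diff (μ := ν₁) t hu
    have h₂ := measure_inter_add_diff (μ := ν₂) t hu
    simp only [hgdef]
    rw [← h₁, ← h₂, ENNReal.toReal_add (measure_ne_top _ _) (measure_ne_top _ _),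
      ENNReal.toReal_add (measure_ne_top _ _) (measure_ne_top _ _)]
    ring
  have hg_nonneg_S : ∀ t, MeasurableSet t → t ⊆ S → 0 ≤ g t := by
    intro t ht hts
    exact sub_nonneg.2 ((ENNReal.toReal_le_toReal (measure_ne_top _ _)
      (measure_ne_top _ _)).2 (hS₁ t ht hts))
  have hg_nonpos : ∀ t, MeasurableSet t → t ⊆ Sᶜ → g t ≤ 0 := by
    intro t ht hts
    exact sub_nonpos.2 ((ENNReal.toReal_le_toReal (measure_ne_top _ _)
      (measure_ne_top _ _)).2 (hS₂ t ht hts))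
  have hg_le : ∀ t, MeasurableSet t → g t ≤ g S := by
    intro t ht
    have h1 := hg_split t S hSm
    have h2 := hg_split S t ht
    have h3 : g (t \ S) ≤ 0 := hg_nonpos _ (ht.diff hSm) (diff_subset_compl t S)
    have h4 : 0 ≤ g (S \ t) := hg_nonneg_S _ (hSm.diff ht) diff_subset
    have h5 : g (t ∩ S) = g (S ∩ t) := by rw [inter_comm]
    linarith
  have hgS_nonneg : 0 ≤ g S := hg_nonneg_S S hSm subset_rfl
  have hg_compl : ∀ t, MeasurableSet t → g tᶜ = - g t := by
    intro t ht
    simp only [hgdef]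
    rw [prob_compl_eq_one_sub ht, prob_compl_eq_one_sub ht,
      ENNReal.toReal_sub_of_le prob_le_one ENNReal.one_ne_top,
      ENNReal.toReal_sub_of_le prob_le_one ENNReal.one_ne_top, ENNReal.toReal_one]
    ring
  have habs : ∀ t, MeasurableSet t → |g t| ≤ g S := by
    intro t ht
    refine abs_le.2 ⟨?_, hg_le t ht⟩
    have h1 := hg_le tᶜ ht.compl
    rw [hg_compl t ht] at h1
    linarith
  have htv : tvDist (μ₁.map f₀) (μ₂.map f₀) = g S := by
    rw [← hν₁f, ← hν₂f]
    unfold tvDist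
    have hbdd : BddAbove (Set.range fun Γ : {s : Set F // MeasurableSet s} =>
        |(ν₁ Γ.1).toReal - (ν₂ Γ.1).toReal|) := by
      refine ⟨g S, ?_⟩
      rintro x ⟨Γ, rfl⟩
      exact habs Γ.1 Γ.2
    refine le_antisymm (ciSup_le fun Γ => habs Γ.1 Γ.2) ?_
    have h := le_ciSup hbdd (⟨S, hSm⟩ : {s : Set F // MeasurableSet s})
    rwa [abs_of_nonneg hgS_nonneg] at h
  -- assemble
  refine ⟨E × E, inferInstance, P, hPuniv, Prod.fst, Prod.snd,
    measurable_fst, measurable_snd, hmap₁, hmap₂, ?_⟩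
  have hsetEq : {ω : E × E | f₀ ω.1 = f₀ ω.2} = A := rfl
  rw [hsetEq, hPA, htv]
  have hlamu : lam univ = ν₁ Sᶜ + ν₂ S := by
    have := hlam_app univ .univ
    simpa [univ_inter] using this
  rw [hlamu, ENNReal.toReal_add (measure_ne_top _ _) (measure_ne_top _ _)]
  have h1 : (ν₁ Sᶜ).toReal = 1 - (ν₁ S).toReal := by
    rw [prob_compl_eq_one_sub hSm,
      ENNReal.toReal_sub_of_le prob_le_one ENNReal.one_ne_top, ENNReal.toReal_one]
  rw [h1]
  simp only [hgdef]
  ring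
end
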